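/- Let θ, φ ∈ ℝ^{n−1} and let q(t) ∈ Δₙ be determined by a smooth curve γ : [0,1] → ℝ^{n−1} with γ(0) = θ via qᵢ(t)/qₙ(t) = e^{θᵢ − γᵢ(t)}. Define the action A(γ) = ∫₀¹ −log(1/n + q̇ₙ(t)) dt. Then for any smooth γ with γ(0) = θ and γ(1) = φ, A(γ) ≥ ψ(θ − φ), with equality for the curve γᵢ(t) = θᵢ − log[((1−t)/n + t qᵢ(1)) / ((1−t)/n + t qₙ(1))], for which q(t) = (1−t)(1/n,…,1/n) + t q(1). -/

import Mathlib

open Real Finset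

/-- `ψ(x) = log(1 + Σ e^{xᵢ})`. -/
noncomputable def psiFun {n : ℕ} (x : Fin n → ℝ) : ℝ :=
  Real.log (1 + ∑ i, Real.exp (x i))

/-- The point `q(t) ∈ Δₙ` determined by a curve `γ` with `γ(0) = θ` via
`qᵢ(t)/qₙ(t) = e^{θᵢ − γᵢ(t)}`, i.e. `qᵢ(t) = e^{θᵢ − γᵢ(t) − ψ(θ − γ(t))}`. -/
noncomputable def qCurve {n : ℕ} (θ : Fin n → ℝ) (γ : ℝ → Fin n → ℝ) (t : ℝ) :
    Fin (n + 1) → ℝ :=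
  fun i => Real.exp ((Fin.snoc (θ - γ t) (0 : ℝ) : Fin (n + 1) → ℝ) i - psiFun (θ - γ t))

lemma one_add_sum_exp_pos {n : ℕ} (x : Fin n → ℝ) : 0 < 1 + ∑ i, Real.exp (x i) := by
  positivity

lemma psiFun_contDiff {n : ℕ} : ContDiff ℝ (⊤ : ℕ∞) (psiFun (n := n)) := by
  apply ContDiff.log
  · exact contDiff_const.add
      (ContDiff.sum fun i _ => Real.contDiff_exp.comp (contDiff_apply ℝ ℝ i))
  · exact fun x => (one_add_sum_exp_pos x).ne'

lemma exp_psiFun {n : ℕ} (x : Fin n → ℝ) : Real.exp (psiFun x) = 1 + ∑ i, Real.exp (x i) :=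
  Real.exp_log (one_add_sum_exp_pos x)

lemma exp_neg_psiFun_zero {n : ℕ} : Real.exp (-psiFun (0 : Fin n → ℝ)) = 1 / (n + 1 : ℝ) := by
  have h : psiFun (0 : Fin n → ℝ) = Real.log (n + 1) := by
    simp [psiFun, add_comm]
  rw [h, Real.exp_neg, Real.exp_log (by positivity)]
  simp

lemma aux_one_add_div (b : ℝ) (hb : 0 < b) : (1 : ℝ) + (1 - b) / b = b⁻¹ := by
  field_simp
  ring

lemma qCurve_last {n : ℕ} (θ : Fin n → ℝ) (γ : ℝ → Fin n → ℝ) (t : ℝ) :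
    qCurve θ γ t (Fin.last n) = Real.exp (-psiFun (θ - γ t)) := by
  simp [qCurve]

/-- The Lagrangian action `A(γ) = ∫₀¹ −log(1/n + q̇ₙ(t)) dt` of a curve `γ` in
`ℝ^{n−1}` dominates the cost `ψ(θ − φ)` over curves from `θ` to `φ`, with equality for
the curve `γᵢ(t) = θᵢ − log[((1−t)/n + t qᵢ(1)) / ((1−t)/n + t qₙ(1))]`, along which the
induced portfolio `q(t)` interpolates linearly between `(1/n, …, 1/n)` and `q(1)`. -/
theorem action_minimizing_curve (n : ℕ) (θ φv : Fin n → ℝ) :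
    (∀ γ : ℝ → Fin n → ℝ, ContDiff ℝ (⊤ : ℕ∞) γ → γ 0 = θ → γ 1 = φv →
      (∀ t ∈ Set.Icc (0:ℝ) 1,
        0 < 1 / (n + 1 : ℝ) + deriv (fun s => qCurve θ γ s (Fin.last n)) t) →
      IntervalIntegrable
        (fun t => -Real.log (1 / (n + 1 : ℝ)
          + deriv (fun s => qCurve θ γ s (Fin.last n)) t))
        MeasureTheory.volume 0 1 →
      psiFun (θ - φv) ≤ ∫ t in (0:ℝ)..1,
        -Real.log (1 / (n + 1 : ℝ)
          + deriv (fun s => qCurve θ γ s (Fin.last n)) t)) ∧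
    (∀ γstar : ℝ → Fin n → ℝ,
      (∀ t i, γstar t i = θ i - Real.log
        (((1 - t) / (n + 1 : ℝ) + t * qCurve θ (fun _ => φv) 1 i.castSucc) /
          ((1 - t) / (n + 1 : ℝ) + t * qCurve θ (fun _ => φv) 1 (Fin.last n)))) →
      ((∫ t in (0:ℝ)..1,
        -Real.log (1 / (n + 1 : ℝ)
          + deriv (fun s => qCurve θ γstar s (Fin.last n)) t)) = psiFun (θ - φv) ∧
      ∀ t ∈ Set.Icc (0:ℝ) 1, ∀ i,
        qCurve θ γstar t i
          = (1 - t) / (n + 1 : ℝ) + t * qCurve θ (fun _ => φv) 1 i)) := by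
  constructor
  · -- Part 1 : lower bound via tangent line of log
    intro γ hγ h0 h1 hpos hint
    set g : ℝ → ℝ := fun s => qCurve θ γ s (Fin.last n) with hgdef
    have hgeq : g = fun s => Real.exp (-psiFun (θ - γ s)) :=
      funext fun s => qCurve_last θ γ s
    have hgc : ContDiff ℝ (⊤ : ℕ∞) g := by
      rw [hgeq]
      exact Real.contDiff_exp.comp ((psiFun_contDiff.comp (contDiff_const.sub hγ)).neg)
    have hderiv_cont : Continuous (deriv g) := hgc.continuous_deriv (by simp)
    have hint_deriv : IntervalIntegrable (deriv g) MeasureTheory.volume 0 1 :=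
      hderiv_cont.intervalIntegrable 0 1
    have hFTC : ∫ t in (0:ℝ)..1, deriv g t = g 1 - g 0 :=
      intervalIntegral.integral_deriv_eq_sub
        (fun x _ => (hgc.differentiable (by simp)).differentiableAt) hint_deriv
    set c : ℝ := Real.exp (-psiFun (θ - φv)) with hcdef
    have hc : 0 < c := Real.exp_pos _
    have hg1 : g 1 = c := by rw [hgeq]; simp [h1, hcdef]
    have hg0 : g 0 = 1 / (n + 1 : ℝ) := by
      rw [hgeq]; simp only [h0, sub_self]; exact exp_neg_psiFun_zero
    set f : ℝ → ℝ := fun t => 1 / (n + 1 : ℝ) + deriv g t with hfdef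
    have hintf : IntervalIntegrable f MeasureTheory.volume 0 1 :=
      (intervalIntegrable_const).add hint_deriv
    have hIf : ∫ t in (0:ℝ)..1, f t = c := by
      rw [hfdef]
      rw [intervalIntegral.integral_add intervalIntegrable_const hint_deriv,
        hFTC, hg1, hg0, intervalIntegral.integral_const]
      simp
    have hmono : ∫ t in (0:ℝ)..1, ((-Real.log c + 1) - (1/c) * f t)
        ≤ ∫ t in (0:ℝ)..1, -Real.log (f t) := by
      apply intervalIntegral.integral_mono_on (by norm_num)
      · exact (intervalIntegrable_const).sub (hintf.const_mul _)
      · exact hint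
      · intro t ht
        have hft : 0 < f t := hpos t ht
        have h := Real.log_le_sub_one_of_pos (div_pos hft hc)
        rw [Real.log_div hft.ne' hc.ne'] at h
        have hdc : f t / c = (1/c) * f t := by ring
        rw [hdc] at h
        linarith
    have hLHS : ∫ t in (0:ℝ)..1, ((-Real.log c + 1) - (1/c) * f t) = -Real.log c := by
      rw [intervalIntegral.integral_sub intervalIntegrable_const (hintf.const_mul _),
        intervalIntegral.integral_const, intervalIntegral.integral_const_mul, hIf]
      field_simp
      simp only [sub_zero, one_smul]
      ring
    have hlogc : -Real.log c = psiFun (θ - φv) := by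
      rw [hcdef, Real.log_exp, neg_neg]
    calc psiFun (θ - φv) = -Real.log c := hlogc.symm
      _ = _ := hLHS.symm
      _ ≤ _ := hmono
  · -- Part 2 : the explicit minimizer
    intro γstar hγs
    set r : Fin (n + 1) → ℝ := qCurve θ (fun _ => φv) 1 with hrdef
    have hr_pos : ∀ i, 0 < r i := fun i => Real.exp_pos _
    have hr_sum : ∑ i, r i = 1 := by
      have : ∀ i, r i = Real.exp ((Fin.snoc (θ - φv) 0 : Fin (n+1) → ℝ) i)
          * Real.exp (-psiFun (θ - φv)) := by
        intro i
        rw [hrdef]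
        simp [qCurve, Real.exp_sub, Real.exp_neg, div_eq_mul_inv]
      rw [Finset.sum_congr rfl fun i _ => this i, ← Finset.sum_mul,
        Fin.sum_univ_castSucc]
      simp only [Fin.snoc_castSucc, Fin.snoc_last, Real.exp_zero]
      rw [Real.exp_neg, add_comm, ← exp_psiFun (θ - φv)]
      field_simp
    have hsum_p : ∀ t : ℝ, ∑ i, ((1 - t) / (n + 1 : ℝ) + t * r i) = 1 := by
      intro t
      rw [Finset.sum_add_distrib, ← Finset.mul_sum, hr_sum, Finset.sum_const]
      simp only [Finset.card_univ, Fintype.card_fin, nsmul_eq_mul, mul_one]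
      have hn : (n + 1 : ℝ) ≠ 0 := by positivity
      push_cast
      field_simp
      ring
    have key : ∀ t : ℝ, (∀ i, 0 < (1 - t) / (n + 1 : ℝ) + t * r i) →
        ∀ i, qCurve θ γstar t i = (1 - t) / (n + 1 : ℝ) + t * r i := by
      intro t hpt
      have hlast : 0 < (1 - t) / (n + 1 : ℝ) + t * r (Fin.last n) := hpt _
      have hθγ : ∀ j : Fin n, (θ - γstar t) j =
          Real.log (((1 - t) / (n + 1 : ℝ) + t * r j.castSucc)
            / ((1 - t) / (n + 1 : ℝ) + t * r (Fin.last n))) := by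
        intro j
        rw [Pi.sub_apply, hγs t j]
        ring
      have hψ : psiFun (θ - γstar t)
          = -Real.log ((1 - t) / (n + 1 : ℝ) + t * r (Fin.last n)) := by
        unfold psiFun
        have hexp : ∀ j : Fin n, Real.exp ((θ - γstar t) j)
            = ((1 - t) / (n + 1 : ℝ) + t * r j.castSucc)
              / ((1 - t) / (n + 1 : ℝ) + t * r (Fin.last n)) := by
          intro j
          rw [hθγ j, Real.exp_log (div_pos (hpt _) hlast)]
        rw [Finset.sum_congr rfl fun j _ => hexp j, ← Finset.sum_div]
        have hsum' : ∑ j : Fin n, ((1 - t) / (n + 1 : ℝ) + t * r j.castSucc)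
            = 1 - ((1 - t) / (n + 1 : ℝ) + t * r (Fin.last n)) := by
          have h := hsum_p t
          rw [Fin.sum_univ_castSucc] at h
          linarith
        rw [hsum', aux_one_add_div _ hlast, Real.log_inv]
      intro i
      refine Fin.lastCases ?_ ?_ i
      · show Real.exp ((Fin.snoc (θ - γstar t) 0 : Fin (n+1) → ℝ) (Fin.last n)
            - psiFun (θ - γstar t)) = _
        rw [Fin.snoc_last, hψ, zero_sub, neg_neg, Real.exp_log hlast]
      · intro j
        show Real.exp ((Fin.snoc (θ - γstar t) 0 : Fin (n+1) → ℝ) j.castSucc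
            - psiFun (θ - γstar t)) = _
        rw [Fin.snoc_castSucc, hθγ j, hψ, sub_neg_eq_add, Real.exp_add,
          Real.exp_log (div_pos (hpt _) hlast), Real.exp_log hlast,
          div_mul_cancel₀ _ hlast.ne']
    have hp_pos : ∀ t ∈ Set.Icc (0:ℝ) 1, ∀ i, 0 < (1 - t) / (n + 1 : ℝ) + t * r i := by
      intro t ht i
      rcases eq_or_lt_of_le ht.1 with h | h
      · rw [← h]; simp; positivity
      · have h1 : 0 < t * r i := mul_pos h (hr_pos i)
        have h2 : 0 ≤ (1 - t) / (n + 1 : ℝ) :=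
          div_nonneg (by linarith [ht.2]) (by positivity)
        linarith
    have hderiv : ∀ t ∈ Set.Icc (0:ℝ) 1,
        deriv (fun s => qCurve θ γstar s (Fin.last n)) t
          = r (Fin.last n) - 1 / (n + 1 : ℝ) := by
      intro t ht
      have hev : (fun s => qCurve θ γstar s (Fin.last n))
          =ᶠ[nhds t] (fun s => (1 - s) / (n + 1 : ℝ) + s * r (Fin.last n)) := by
        have hall : ∀ᶠ s in nhds t, ∀ i, 0 < (1 - s) / (n + 1 : ℝ) + s * r i := by
          refine Filter.eventually_all.2 fun i => ?_
          have hc : Continuous fun s : ℝ => (1 - s) / (n + 1 : ℝ) + s * r i := by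
            continuity
          exact (hc.tendsto t).eventually (eventually_gt_nhds (hp_pos t ht i))
        exact hall.mono fun s hs => key s hs (Fin.last n)
      rw [hev.deriv_eq]
      have hd : HasDerivAt (fun s : ℝ => (1 - s) / (n + 1 : ℝ) + s * r (Fin.last n))
          (-1 / (n + 1 : ℝ) + 1 * r (Fin.last n)) t :=
        (((hasDerivAt_id t).const_sub 1).div_const _).add
          ((hasDerivAt_id t).mul_const _)
      rw [hd.deriv]
      ring
    constructor
    · have hcongr : ∀ t ∈ Set.uIcc (0:ℝ) 1,
          -Real.log (1 / (n + 1 : ℝ)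
            + deriv (fun s => qCurve θ γstar s (Fin.last n)) t) = psiFun (θ - φv) := by
        intro t ht
        rw [Set.uIcc_of_le (by norm_num)] at ht
        rw [hderiv t ht]
        have : (1 : ℝ) / (n + 1 : ℝ) + (r (Fin.last n) - 1 / (n + 1 : ℝ))
            = r (Fin.last n) := by ring
        rw [this, hrdef, qCurve_last]
        simp [Real.log_exp]
      rw [intervalIntegral.integral_congr hcongr]
      simp
    · intro t ht i
      exact key t (hp_pos t ht) i
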